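/- arXiv:1003.2588 — 2 statements merged into one kernel-verified Lean document; each statement's English description precedes it below -/
import Mathlib

section
/- There exists a 6-element subset of ℝ³ that is not T-shaped; hence t(ℝ³) = 6. -/
/-- The set `T_n ⊆ ℝⁿ`, with `T_0 = ∅` and `T_{n+1} = (ℝⁿ × {0}) ∪ (T_n × ℝ₊)`. -/
def Tset : (n : ℕ) → Set (Fin n → ℝ)
  | 0 => ∅
  | n + 1 =>
      {x | x (Fin.last n) = 0 ∨
        ((fun i : Fin n => x i.castSucc) ∈ Tset n ∧ 0 ≤ x (Fin.last n))}

/-- `C ⊆ ℝ^{n+1}` is T-shaped if some invertible affine transformation maps it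
into `ℝ × T_n`. -/
def IsTShaped (n : ℕ) (C : Set (Fin (n + 1) → ℝ)) : Prop :=
  ∃ f : (Fin (n + 1) → ℝ) ≃ᵃ[ℝ] (Fin (n + 1) → ℝ),
    ∀ x ∈ C, (fun i : Fin n => f x i.succ) ∈ Tset n

/-!
The six vertices `±e₁, ±e₂, ±e₃` of the octahedron do not form a T-shaped set. Suppose a
surjective affine map `F = m + L : ℝ³ → ℝ²` sent them into `T₂`. Each pair `m ± L eᵢ ∈ T₂`
forces `m₀ (L eᵢ)₁ + m₁ (L eᵢ)₀ = 0`; as this is linear in `eᵢ`, it holds for every `L w`,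
and surjectivity of `L` gives `m = 0`. But then `±L eᵢ ∈ T₂` forces `(L eᵢ)₁ = 0`, so `L`
is not surjective after all.

Conversely, a set of at most five points can be enlarged to exactly five. Five points of `ℝ³`
carry an affine dependence with a positive coefficient at some `p` and a negative one at
some `q`; the plane through the remaining three points then has `p` and `q` on the same
closed side, and any plane through `p` and `q` transversal to it completes the T-shape.
-/

open Function Module Set

section LinearAlgebra

variable {K V : Type*} [Field K] [AddCommGroup V] [Module K V]

theorem Submodule.exists_mem_notMem_span_singleton {p : Submodule K V} (hp : 1 < finrank K p)
    (w : V) : ∃ x ∈ p, x ∉ K ∙ w := by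
  by_contra! h
  have := (Submodule.finrank_mono h).trans (finrank_span_le_card {w})
  simp only [toFinset_singleton, Finset.card_singleton] at this
  omega

theorem Module.Dual.exists_apply_eq_zero_linearIndependent [FiniteDimensional K V]
    (hV : 3 ≤ finrank K V) (u : V) {α : Dual K V} (hα : α ≠ 0) :
    ∃ β : Dual K V, β u = 0 ∧ LinearIndependent K ![β, α] := by
  have hker : 1 < finrank K (LinearMap.ker (Dual.eval K V u)) := by
    have h₁ := LinearMap.finrank_range_add_finrank_ker (Dual.eval K V u)
    have h₂ := Submodule.finrank_le (LinearMap.range (Dual.eval K V u))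
    rw [Subspace.dual_finrank_eq] at h₁
    rw [Module.finrank_self] at h₂
    omega
  obtain ⟨β, hβu, hβα⟩ := Submodule.exists_mem_notMem_span_singleton hker α
  refine ⟨β, hβu, linearIndependent_fin2.mpr ⟨hα, fun a h => hβα ?_⟩⟩
  exact Submodule.mem_span_singleton.mpr ⟨a, h⟩

theorem LinearMap.pi_surjective_of_linearIndependent {ι : Type*} [Finite ι] {f : ι → Dual K V}
    (hf : LinearIndependent K f) : Surjective (LinearMap.pi f) := by
  have hf' : LinearIndependent K fun i => ⇑(f i) :=
    hf.map' (LinearMap.ltoFun K V K K) (LinearMap.ker_eq_bot.mpr DFunLike.coe_injective)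
  rw [← LinearMap.range_eq_top, ← span_flip_eq_top_iff_linearIndependent.mpr hf']
  change _ = Submodule.span K (Set.range (LinearMap.pi f))
  rw [← LinearMap.coe_range, Submodule.span_eq]

theorem exists_affineMap_eq_zero_of_vectorSpan_ne_top {s : Set V} (hs : vectorSpan K s ≠ ⊤) :
    ∃ g : V →ᵃ[K] K, g.linear ≠ 0 ∧ ∀ x ∈ s, g x = 0 := by
  obtain ⟨α, hα, hαs⟩ := Submodule.exists_dual_map_eq_bot_of_lt_top hs.lt_top inferInstance
  obtain ⟨x₀, hx₀⟩ : ∃ x₀, ∀ x ∈ s, x - x₀ ∈ vectorSpan K s := by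
    rcases s.eq_empty_or_nonempty with rfl | ⟨x₀, hx₀⟩
    · exact ⟨0, by simp⟩
    · exact ⟨x₀, fun x hx => vsub_mem_vectorSpan K hx hx₀⟩
  refine ⟨α.toAffineMap - AffineMap.const K V (α x₀), by simpa using hα, fun x hx => ?_⟩
  have := Submodule.mem_map_of_mem (f := α) (hx₀ x hx)
  rw [hαs, Submodule.mem_bot, map_sub] at this
  simpa [sub_eq_zero] using this

theorem AffineMap.sum_smul_apply_eq_zero {W ι : Type*} [AddCommGroup W] [Module K W]
    (g : V →ᵃ[K] W) (s : Finset ι) {w : ι → K} {p : ι → V} (hw : ∑ i ∈ s, w i = 0)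
    (hwp : ∑ i ∈ s, w i • p i = 0) : ∑ i ∈ s, w i • g (p i) = 0 := by
  calc ∑ i ∈ s, w i • g (p i) = g.linear (∑ i ∈ s, w i • p i) + (∑ i ∈ s, w i) • g 0 := by
        simp only [map_sum, map_smul, Finset.sum_smul, ← Finset.sum_add_distrib, ← smul_add]
        congr! 2 with i
        exact congrFun g.decomp (p i)
    _ = 0 := by rw [hw, hwp, map_zero, zero_smul, add_zero]

theorem AffineMap.exists_affineEquiv_tail_eq {n : ℕ} (F : (Fin (n + 1) → K) →ᵃ[K] (Fin n → K))
    (hF : Surjective F) :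
    ∃ f : (Fin (n + 1) → K) ≃ᵃ[K] (Fin (n + 1) → K), ∀ x, Fin.tail (f x) = F x := by
  have hL : Surjective F.linear := F.linear_surjective_iff.mpr hF
  have hker : finrank K (LinearMap.ker F.linear) = 1 := by
    have := LinearMap.finrank_range_add_finrank_ker F.linear
    rw [LinearMap.range_eq_top.mpr hL, finrank_top, Module.finrank_fin_fun,
      Module.finrank_fin_fun] at this
    omega
  obtain ⟨⟨k, hkL⟩, hk0, hk⟩ := finrank_eq_one_iff'.mp hker
  obtain ⟨i, hi⟩ : ∃ i, k i ≠ 0 := by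
    by_contra! h
    exact hk0 (Subtype.ext (funext h))
  -- `ker F.linear = K ∙ k` meets the hyperplane `{x | x i = 0}` only in `0`.
  let Φ := (LinearMap.proj i : (Fin (n + 1) → K) →ₗ[K] K).vecCons F.linear
  have hΦ : Injective Φ := by
    rw [← LinearMap.ker_eq_bot, Submodule.eq_bot_iff]
    intro x hx
    obtain ⟨hxi, hxL⟩ : x i = 0 ∧ F.linear x = 0 := by simpa [Φ] using hx
    obtain ⟨c, hc⟩ := hk ⟨x, hxL⟩
    have hc' : c • k = x := congrArg Subtype.val hc
    have : c = 0 := by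
      have : c * k i = 0 := by rw [← hxi, ← hc']; rfl
      exact (mul_eq_zero.mp this).resolve_right hi
    rw [← hc', this, zero_smul]
  refine ⟨(LinearEquiv.ofInjectiveEndo Φ hΦ).toAffineEquiv.trans
    (AffineEquiv.constVAdd K _ (Fin.cons 0 (F 0))), fun x => ?_⟩
  funext j
  conv_rhs => rw [F.decomp]
  simp [Φ, Fin.tail, add_comm]


theorem vectorSpan_ne_top_of_card_le_finrank [FiniteDimensional K V] [Nontrivial V] {A : Finset V}
    (hA : A.card ≤ finrank K V) : vectorSpan K (A : Set V) ≠ ⊤ := by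
  classical
  intro htop
  rcases hcard : A.card with _ | d
  · rw [Finset.card_eq_zero.mp hcard, Finset.coe_empty, vectorSpan_empty] at htop
    exact bot_ne_top htop
  · have := finrank_vectorSpan_image_finset_le K id A hcard
    rw [Finset.image_id, htop, finrank_top] at this
    omega

theorem exists_affineMap_eq_zero_or_eq_pair_of_card_eq [LinearOrder K] [IsStrictOrderedRing K]
    [FiniteDimensional K V] {t : Finset V} (ht : t.card = finrank K V + 2) :
    ∃ (g : V →ᵃ[K] K) (p q : V), g.linear ≠ 0 ∧ 0 ≤ g p ∧ 0 ≤ g q ∧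
      ∀ x ∈ t, g x = 0 ∨ x = p ∨ x = q := by
  classical
  obtain ⟨w, hw_smul, hw_sum, p, hp, hwp⟩ :=
    FiniteDimensional.exists_relation_sum_zero_pos_coefficient_of_finrank_succ_lt_card (L := K)
      (t := t) (by omega)
  obtain ⟨q, hq, hwq⟩ : ∃ q ∈ t, w q < 0 := by
    obtain ⟨q, hq, hq'⟩ := Finset.exists_pos_of_sum_zero_of_exists_nonzero (-w)
      (by simp [hw_sum]) ⟨p, hp, by simp [hwp.ne']⟩
    exact ⟨q, hq, by simpa using hq'⟩
  have hpq : p ≠ q := by rintro rfl; linarith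
  have : Nontrivial V := nontrivial_of_ne p q hpq
  set A := (t.erase p).erase q
  have hA : vectorSpan K (A : Set V) ≠ ⊤ := by
    refine vectorSpan_ne_top_of_card_le_finrank ?_
    rw [Finset.card_erase_of_mem (Finset.mem_erase.mpr ⟨hpq.symm, hq⟩),
      Finset.card_erase_of_mem hp, ht]
    omega
  obtain ⟨g, hg, hgA⟩ := exists_affineMap_eq_zero_of_vectorSpan_ne_top hA
  have hrel : w p * g p + w q * g q = 0 := by
    have hsum := g.sum_smul_apply_eq_zero t hw_sum hw_smul
    rwa [Finset.sum_eq_add_of_mem p q hp hq hpq fun x hx hne => ?_] at hsum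
    simp [hgA x (by simp [A, hx, hne.1, hne.2])]
  wlog hgp : 0 ≤ g p generalizing g
  · exact this (-g) (by simpa using hg) (by simpa using hgA)
      (by simp only [AffineMap.coe_neg, Pi.neg_apply, mul_neg]; linarith)
      (by simp only [AffineMap.coe_neg, Pi.neg_apply, Left.nonneg_neg_iff]; linarith)
  refine ⟨g, p, q, hg, hgp, by nlinarith, fun x hx => ?_⟩
  by_cases hxp : x = p
  · exact Or.inr (Or.inl hxp)
  by_cases hxq : x = q
  · exact Or.inr (Or.inr hxq)
  exact Or.inl (hgA x (by simp [A, hx, hxp, hxq]))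

end LinearAlgebra

theorem mem_Tset_two {y : Fin 2 → ℝ} : y ∈ Tset 2 ↔ y 1 = 0 ∨ (y 0 = 0 ∧ 0 ≤ y 1) := by
  simp [Tset]

theorem mul_add_mul_eq_zero_of_add_mem_Tset_two_of_sub_mem {m v : Fin 2 → ℝ}
    (hadd : m + v ∈ Tset 2) (hsub : m - v ∈ Tset 2) : m 0 * v 1 + m 1 * v 0 = 0 := by
  simp only [mem_Tset_two, Pi.add_apply, Pi.sub_apply] at hadd hsub
  rcases hadd with hadd | ⟨hadd, -⟩ <;> rcases hsub with hsub | ⟨hsub, -⟩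
  · linear_combination (m 0 + v 0) / 2 * hadd + (v 0 - m 0) / 2 * hsub
  · linear_combination v 0 * hadd + v 1 * hsub
  · linear_combination v 1 * hadd + v 0 * hsub
  · linear_combination (m 1 + v 1) / 2 * hadd + (v 1 - m 1) / 2 * hsub

theorem eq_zero_of_mem_Tset_two_of_neg_mem {v : Fin 2 → ℝ} (h : v ∈ Tset 2) (h' : -v ∈ Tset 2) :
    v 1 = 0 := by
  simp only [mem_Tset_two, Pi.neg_apply, neg_eq_zero, Left.nonneg_neg_iff] at h h'
  rcases h with h | ⟨-, h⟩ <;> rcases h' with h' | ⟨-, h'⟩ <;> linarith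

theorem IsTShaped.mono {n : ℕ} {C D : Set (Fin (n + 1) → ℝ)} (hCD : C ⊆ D) (hD : IsTShaped n D) :
    IsTShaped n C :=
  let ⟨f, hf⟩ := hD; ⟨f, fun x hx => hf x (hCD hx)⟩

theorem isTShaped_two_iff {C : Set (Fin 3 → ℝ)} :
    IsTShaped 2 C ↔
      ∃ F : (Fin 3 → ℝ) →ᵃ[ℝ] (Fin 2 → ℝ), Surjective F ∧ MapsTo F C (Tset 2) := by
  constructor
  · rintro ⟨f, hf⟩
    exact ⟨(LinearMap.funLeft ℝ ℝ (Fin.succ : Fin 2 → Fin 3)).toAffineMap.comp f.toAffineMap,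
      (Fin.succ_injective 2).surjective_comp_right.comp f.surjective,
      hf⟩
  · rintro ⟨F, hF, hFC⟩
    obtain ⟨f, hf⟩ := F.exists_affineEquiv_tail_eq hF
    refine ⟨f, fun x hx => ?_⟩
    have := hFC hx
    rwa [← hf x] at this

theorem not_isTShaped_two_of_add_mem_of_sub_mem {C : Set (Fin 3 → ℝ)} (o : Fin 3 → ℝ)
    {S : Set (Fin 3 → ℝ)} (hS : Submodule.span ℝ S = ⊤) (hC : ∀ v ∈ S, o + v ∈ C ∧ o - v ∈ C) :
    ¬ IsTShaped 2 C := by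
  rw [isTShaped_two_iff]
  rintro ⟨F, hF, hFC⟩
  set m := F o
  set L := F.linear
  have hF_add : ∀ v, F (o + v) = m + L v := fun v => by
    rw [add_comm o v, ← vadd_eq_add, F.map_vadd, vadd_eq_add, add_comm]
  have hmem : ∀ v ∈ S, m + L v ∈ Tset 2 ∧ m - L v ∈ Tset 2 := fun v hv =>
    ⟨hF_add v ▸ hFC (hC v hv).1, by simpa [sub_eq_add_neg, hF_add] using hFC (hC v hv).2⟩
  have hL : Surjective L := F.linear_surjective_iff.mpr hF
  have vanish : ∀ φ : (Fin 3 → ℝ) →ₗ[ℝ] ℝ, (∀ v ∈ S, φ v = 0) → ∀ w, φ w = 0 :=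
    fun φ h w => by rw [LinearMap.ext_on hS (g := 0) h]; rfl
  obtain ⟨e₀, he₀⟩ := hL ![1, 0]
  obtain ⟨e₁, he₁⟩ := hL ![0, 1]
  have hm : m = 0 := by
    have key := vanish (m 0 • (LinearMap.proj 1 ∘ₗ L) + m 1 • (LinearMap.proj 0 ∘ₗ L))
      fun v hv => by
        simpa using mul_add_mul_eq_zero_of_add_mem_Tset_two_of_sub_mem (hmem v hv).1 (hmem v hv).2
    have h₀ : m 1 = 0 := by simpa [he₀] using key e₀
    have h₁ : m 0 = 0 := by simpa [he₁] using key e₁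
    funext i
    fin_cases i <;> simp [h₀, h₁]
  have := vanish (LinearMap.proj 1 ∘ₗ L) (fun v hv => by
    simpa [hm] using eq_zero_of_mem_Tset_two_of_neg_mem (by simpa [hm] using (hmem v hv).1)
      (by simpa [hm] using (hmem v hv).2)) e₁
  simp [he₁] at this

def crossPolytopeVertices (n : ℕ) : Set (Fin n → ℝ) :=
  range (Pi.basisFun ℝ (Fin n)) ∪ range fun i => -Pi.basisFun ℝ (Fin n) i

theorem encard_crossPolytopeVertices (n : ℕ) : (crossPolytopeVertices n).encard = 2 * n := by
  set e := Pi.basisFun ℝ (Fin n)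
  have hdisj : Disjoint (range e) (range fun i => -e i) := by
    rw [Set.disjoint_range_iff]
    intro i j h
    have := congrFun h i
    obtain rfl | hij := eq_or_ne j i
    · norm_num [e] at this
    · simp [e, hij] at this
  rw [crossPolytopeVertices, Set.encard_union_eq hdisj, ← image_univ, ← image_univ,
    e.injective.encard_image,
    Injective.encard_image (f := fun i => -e i) (neg_injective.comp e.injective)]
  simp [two_mul]

theorem not_isTShaped_crossPolytopeVertices : ¬ IsTShaped 2 (crossPolytopeVertices 3) :=
  not_isTShaped_two_of_add_mem_of_sub_mem 0 (Pi.basisFun ℝ (Fin 3)).span_eq fun _ ⟨i, hi⟩ => by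
    simp [crossPolytopeVertices, ← hi]

theorem isTShaped_two_of_linearIndependent {C : Set (Fin 3 → ℝ)} (h g : (Fin 3 → ℝ) →ᵃ[ℝ] ℝ)
    (hhg : LinearIndependent ℝ ![h.linear, g.linear])
    (hC : ∀ x ∈ C, g x = 0 ∨ (h x = 0 ∧ 0 ≤ g x)) : IsTShaped 2 C := by
  refine isTShaped_two_iff.mpr ⟨AffineMap.pi ![h, g], ?_, fun x hx => ?_⟩
  · rw [← AffineMap.linear_surjective_iff]
    convert LinearMap.pi_surjective_of_linearIndependent hhg
    ext x i
    fin_cases i <;> simp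
  · simpa [mem_Tset_two] using hC x hx

theorem isTShaped_two_of_forall_eq_zero_or_eq_pair {C : Set (Fin 3 → ℝ)}
    (g : (Fin 3 → ℝ) →ᵃ[ℝ] ℝ) (hg : g.linear ≠ 0) {p q : Fin 3 → ℝ} (hp : 0 ≤ g p) (hq : 0 ≤ g q)
    (hC : ∀ x ∈ C, g x = 0 ∨ x = p ∨ x = q) : IsTShaped 2 C := by
  obtain ⟨β, hβ, hind⟩ := Dual.exists_apply_eq_zero_linearIndependent (by simp) (q - p) hg
  refine isTShaped_two_of_linearIndependent (β.toAffineMap - AffineMap.const ℝ _ (β p)) g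
    (by simpa using hind) fun x hx => ?_
  rcases hC x hx with hx | rfl | rfl
  · exact Or.inl hx
  · exact Or.inr ⟨by simp, hp⟩
  · exact Or.inr ⟨by simpa [sub_eq_zero] using hβ, hq⟩

theorem isTShaped_two_of_encard_eq_five {C : Set (Fin 3 → ℝ)} (hC : C.encard = 5) :
    IsTShaped 2 C := by
  have hfin : C.Finite := Set.finite_of_encard_eq_coe hC
  obtain ⟨g, p, q, hg, hp, hq, hgC⟩ :=
    exists_affineMap_eq_zero_or_eq_pair_of_card_eq (K := ℝ) (t := hfin.toFinset) (by
      rw [hfin.encard_eq_coe_toFinset_card] at hC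
      simp only [Module.finrank_fin_fun]
      exact_mod_cast hC)
  exact isTShaped_two_of_forall_eq_zero_or_eq_pair g hg hp hq fun x hx => hgC x (by simpa using hx)

theorem isTShaped_two_of_encard_lt_six {C : Set (Fin 3 → ℝ)} (hC : C.encard < 6) :
    IsTShaped 2 C := by
  obtain ⟨D, hCD, -, hD⟩ := Set.exists_superset_subset_encard_eq (subset_univ C) (k := 5)
    (Order.le_of_lt_add_one hC) (by simp)
  exact (isTShaped_two_of_encard_eq_five hD).mono hCD

/-- There is a 6-element non-T-shaped subset of `ℝ³`, and every subset with
fewer than 6 elements is T-shaped; hence `t(ℝ³) = 6`. -/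
theorem exists_six_point_non_tShaped :
    (∃ C : Set (Fin 3 → ℝ), C.encard = 6 ∧ ¬ IsTShaped 2 C) ∧
    (∀ C : Set (Fin 3 → ℝ), C.encard < 6 → IsTShaped 2 C) :=
  ⟨⟨crossPolytopeVertices 3, by rw [encard_crossPolytopeVertices]; rfl,
    not_isTShaped_crossPolytopeVertices⟩, fun _ => isTShaped_two_of_encard_lt_six⟩
end

section
/- For every n ≥ 1, t(ℝⁿ) ≥ n(n+1)/2. -/
/-- `tNum n = t(ℝ^{n+1})`, the least cardinality of a non-T-shaped subset of
`ℝ^{n+1}`. -/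
noncomputable def tNum (n : ℕ) : ℕ :=
  sInf {m : ℕ | ∃ C : Set (Fin (n + 1) → ℝ), C.encard = m ∧ ¬ IsTShaped n C}

/-!
A finite `C ⊆ ℝ^{n+1}` with fewer than `(n+1)(n+2)/2` points is T-shaped. Take a hyperplane `H`
supporting `C` that contains at least `min (#C) (n+1)` of its points (a facet of the convex hull,
found by tilting a supporting hyperplane about the points it already contains). An affine change
of coordinates sends `H` to `{x_last = 0}` and `C` into `{x_last ≥ 0}`, and the fewer than
`n(n+1)/2` points off `H` project to a T-shaped subset of `ℝⁿ` by induction; this embedding is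
lifted back to `ℝ^{n+1}` keeping the last coordinate.

The infimum defining `tNum` is over a nonempty set (otherwise it would be `0`): a T-shaped set
lies on `n` hyperplanes, while a hyperplane meets the moment curve `t ↦ (t, t², …, t^{n+1})` in
at most `n+1` points, so `n(n+1)+1` points of that curve form a non-T-shaped set.
-/

open Module

theorem AffineMap.linear_ne_zero_of_apply_ne {k P V W : Type*} [Ring k] [AddCommGroup V]
    [Module k V] [AddTorsor V P] [AddCommGroup W] [Module k W] {f : P →ᵃ[k] W} {x y : P}
    (h : f x ≠ f y) : f.linear ≠ 0 := by
  rw [Ne, AffineMap.linear_eq_zero_iff_exists_const]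
  rintro ⟨q, rfl⟩
  exact h rfl

theorem exists_nonneg_add_mul_eq_zero {α : Type*} {C : Set α} (hC : C.Finite) {f g : α → ℝ}
    (hf : ∀ x ∈ C, 0 ≤ f x) {p : α} (hp : p ∈ C) (hgp : g p < 0) :
    ∃ t : ℝ, (∀ x ∈ C, 0 ≤ f x + t * g x) ∧ ∃ x₀ ∈ C, g x₀ < 0 ∧ f x₀ + t * g x₀ = 0 := by
  obtain ⟨x₀, ⟨hx₀, hgx₀⟩, hmin⟩ := Set.exists_min_image {x ∈ C | g x < 0}
    (fun x => f x / -g x) (hC.subset (Set.sep_subset _ _)) ⟨p, hp, hgp⟩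
  refine ⟨f x₀ / -g x₀, fun x hx => ?_, x₀, hx₀, hgx₀, by field_simp [hgx₀.ne]; ring⟩
  rcases le_or_gt 0 (g x) with hgx | hgx
  · exact add_nonneg (hf x hx) (mul_nonneg (div_nonneg (hf x₀ hx₀) (by linarith)) hgx)
  · have := (le_div_iff₀ (neg_pos.2 hgx)).1 (hmin x ⟨hx, hgx⟩)
    linarith

section Supporting

variable {V : Type*} [AddCommGroup V] [Module ℝ V]

theorem exists_affineMap_linear_ne_zero_nonneg [Nontrivial V] {C : Set V} (hC : C.Finite) :
    ∃ ℓ : V →ᵃ[ℝ] ℝ, ℓ.linear ≠ 0 ∧ ∀ x ∈ C, 0 ≤ ℓ x := by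
  obtain ⟨φ, hφ, -⟩ := Submodule.exists_le_ker_of_lt_top (⊥ : Submodule ℝ V) bot_lt_top
  obtain ⟨b, hb⟩ := (hC.image φ).bddBelow
  refine ⟨φ.toAffineMap - AffineMap.const ℝ V b, by simpa using hφ, fun x hx => ?_⟩
  simpa using hb ⟨x, hx, rfl⟩

theorem exists_affineMap_linear_ne_zero_eq_zero [FiniteDimensional ℝ V] {s : Set V}
    (hs : s.Finite) {c : V} (hc : c ∈ s) (hcard : s.ncard ≤ finrank ℝ V) :
    ∃ m : V →ᵃ[ℝ] ℝ, m.linear ≠ 0 ∧ ∀ x ∈ s, m x = 0 := by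
  have : Fintype s := hs.fintype
  have : Nonempty s := ⟨⟨c, hc⟩⟩
  have hspan : vectorSpan ℝ s < ⊤ := by
    refine Submodule.lt_top_of_finrank_lt_finrank ?_
    have := finrank_vectorSpan_range_add_one_le ℝ ((↑) : s → V)
    rw [Subtype.range_coe, ← Nat.card_eq_fintype_card, Nat.card_coe_set_eq] at this
    omega
  obtain ⟨φ, hφ, hker⟩ := Submodule.exists_le_ker_of_lt_top _ hspan
  refine ⟨φ.toAffineMap - AffineMap.const ℝ V (φ c), by simpa using hφ, fun x hx => ?_⟩
  simpa [sub_eq_zero] using hker (vsub_mem_vectorSpan ℝ hx hc)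

theorem exists_affineMap_nonneg_zeroSet_ssubset [FiniteDimensional ℝ V] {C : Set V} (hC : C.Finite)
    {ℓ : V →ᵃ[ℝ] ℝ} (hℓ : ∀ x ∈ C, 0 ≤ ℓ x) {c : V} (hc : c ∈ C) (hℓc : ℓ c ≠ 0)
    (hcard : {x ∈ C | ℓ x = 0}.ncard < finrank ℝ V) :
    ∃ ℓ' : V →ᵃ[ℝ] ℝ, ℓ'.linear ≠ 0 ∧ (∀ x ∈ C, 0 ≤ ℓ' x) ∧
      {x ∈ C | ℓ x = 0} ⊂ {x ∈ C | ℓ' x = 0} := by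
  set Z := {x ∈ C | ℓ x = 0}
  have hcZ : c ∉ Z := fun h => hℓc h.2
  obtain ⟨m, hm, hmZ⟩ := exists_affineMap_linear_ne_zero_eq_zero
    ((hC.subset (Set.sep_subset _ _)).insert c) (Set.mem_insert c Z)
    ((Set.ncard_insert_le c Z).trans hcard)
  by_cases hm_nonneg : ∀ x ∈ C, 0 ≤ m x
  · refine ⟨m, hm, hm_nonneg, (Set.ssubset_iff_of_subset fun x hx => ?_).2
      ⟨c, ⟨hc, hmZ c (Set.mem_insert c Z)⟩, hcZ⟩⟩
    exact ⟨hx.1, hmZ x (Set.mem_insert_of_mem c hx)⟩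
  -- otherwise tilt `ℓ` in the direction of `m` until it vanishes at a new point `x₀` of `C`
  obtain ⟨p, hp, hmp⟩ : ∃ p ∈ C, m p < 0 := by simpa using hm_nonneg
  obtain ⟨t, ht, x₀, hx₀, hmx₀, hx₀t⟩ := exists_nonneg_add_mul_eq_zero hC hℓ hp hmp
  have happly : ∀ x, (ℓ + t • m) x = ℓ x + t * m x := fun x => rfl
  refine ⟨ℓ + t • m, AffineMap.linear_ne_zero_of_apply_ne (x := c) (y := x₀) ?_,
    fun x hx => (happly x).symm ▸ ht x hx, (Set.ssubset_iff_of_subset ?_).2 ?_⟩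
  · rw [happly, happly, hx₀t, hmZ c (Set.mem_insert c Z)]
    simpa using hℓc
  · rintro x ⟨hx, hℓx⟩
    exact ⟨hx, by rw [happly, hℓx, hmZ x (Set.mem_insert_of_mem c ⟨hx, hℓx⟩)]; simp⟩
  · exact ⟨x₀, ⟨hx₀, (happly x₀).symm ▸ hx₀t⟩,
      fun hx₀Z => hmx₀.ne (hmZ x₀ (Set.mem_insert_of_mem c hx₀Z))⟩

theorem exists_supporting_affineMap [FiniteDimensional ℝ V] [Nontrivial V] {C : Set V}
    (hC : C.Finite) :
    ∃ ℓ : V →ᵃ[ℝ] ℝ, ℓ.linear ≠ 0 ∧ (∀ x ∈ C, 0 ≤ ℓ x) ∧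
      min C.ncard (finrank ℝ V) ≤ {x ∈ C | ℓ x = 0}.ncard := by
  suffices ∀ k ≤ min C.ncard (finrank ℝ V), ∃ ℓ : V →ᵃ[ℝ] ℝ, ℓ.linear ≠ 0 ∧
      (∀ x ∈ C, 0 ≤ ℓ x) ∧ k ≤ {x ∈ C | ℓ x = 0}.ncard from this _ le_rfl
  intro k hk
  induction k with
  | zero =>
    obtain ⟨ℓ, hℓ, hnonneg⟩ := exists_affineMap_linear_ne_zero_nonneg hC
    exact ⟨ℓ, hℓ, hnonneg, Nat.zero_le _⟩
  | succ k ih =>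
    obtain ⟨ℓ, hℓ, hnonneg, hkZ⟩ := ih (by omega)
    by_cases hZ : k + 1 ≤ {x ∈ C | ℓ x = 0}.ncard
    · exact ⟨ℓ, hℓ, hnonneg, hZ⟩
    obtain ⟨c, hc, hℓc⟩ : ∃ c ∈ C, ℓ c ≠ 0 := by
      by_contra! h
      rw [Set.sep_eq_self_iff_mem_true.2 h] at hZ
      omega
    obtain ⟨ℓ', hℓ', hnonneg', hZZ'⟩ :=
      exists_affineMap_nonneg_zeroSet_ssubset hC hnonneg hc hℓc (by omega)
    exact ⟨ℓ', hℓ', hnonneg', by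
      have := Set.ncard_lt_ncard hZZ' (hC.subset (Set.sep_subset _ _))
      omega⟩

end Supporting

section LastCoordinate

variable {K V : Type*} [Field K] [AddCommGroup V] [Module K V] [FiniteDimensional K V] {m : ℕ}

theorem exists_basis_coord_last_eq (hV : finrank K V = m + 1) {φ : V →ₗ[K] K} (hφ : φ ≠ 0) :
    ∃ B : Basis (Fin (m + 1)) K V, B.coord (Fin.last m) = φ := by
  obtain ⟨v, hv⟩ := LinearMap.surjective hφ 1
  have hker : finrank K (LinearMap.ker φ) = m := by
    have := Module.Dual.finrank_ker_add_one_of_ne_zero hφ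
    omega
  let u : Fin m → V := (LinearMap.ker φ).subtype ∘ Module.finBasisOfFinrankEq K _ hker
  have hli : LinearIndependent K (Fin.snoc u v : Fin (m + 1) → V) := by
    refine linearIndependent_finSnoc.2
      ⟨(Basis.linearIndependent _).map' _ (Submodule.ker_subtype _), fun hvspan => ?_⟩
    have hle : Submodule.span K (Set.range u) ≤ LinearMap.ker φ :=
      Submodule.span_le.2 (Set.range_subset_iff.2 fun i => Subtype.prop _)
    simpa [hv] using hle hvspan
  let B := basisOfLinearIndependentOfCardEqFinrank hli (by simp [hV])
  refine ⟨B, B.ext fun i => ?_⟩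
  have hBi : B i = (Fin.snoc u v : Fin (m + 1) → V) i := by
    simp [B, coe_basisOfLinearIndependentOfCardEqFinrank]
  rw [Basis.coord_apply, Basis.repr_self, hBi]
  induction i using Fin.lastCases with
  | last => simp [hv]
  | cast j => simp [u]

theorem exists_affineEquiv_apply_last_eq (hV : finrank K V = m + 1) {ℓ : V →ᵃ[K] K}
    (hℓ : ℓ.linear ≠ 0) : ∃ h : V ≃ᵃ[K] (Fin (m + 1) → K), ∀ x, h x (Fin.last m) = ℓ x := by
  obtain ⟨B, hB⟩ := exists_basis_coord_last_eq hV hℓ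
  refine ⟨B.equivFun.toAffineEquiv.trans
    (AffineEquiv.constVAdd K _ (Pi.single (Fin.last m) (ℓ 0))), fun x => ?_⟩
  have hcoord : B.repr x (Fin.last m) = ℓ.linear x := by
    rw [← hB, Basis.coord_apply]
  simp [hcoord, congrFun ℓ.decomp x, add_comm]

end LastCoordinate

section SnocLast

variable {k W : Type*} [Ring k] [AddCommGroup W] [Module k W] {n : ℕ}

variable (k W n) in
def Fin.snocLinearEquiv :
    (W × (Fin n → W)) ≃ₗ[k] (Fin (n + 1) → W) where
  __ := Fin.snocEquiv fun _ => W
  map_add' x y := funext <| Fin.lastCases (by simp [Fin.snocEquiv]) (by simp [Fin.snocEquiv])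
  map_smul' c x := funext <| Fin.lastCases (by simp [Fin.snocEquiv]) (by simp [Fin.snocEquiv])

def AffineEquiv.snocLast (g : (Fin n → W) ≃ᵃ[k] (Fin n → W)) :
    (Fin (n + 1) → W) ≃ᵃ[k] (Fin (n + 1) → W) :=
  (Fin.snocLinearEquiv k W n).symm.toAffineEquiv.trans
    (((AffineEquiv.refl k W).prodCongr g).trans (Fin.snocLinearEquiv k W n).toAffineEquiv)

@[simp]
theorem AffineEquiv.snocLast_apply_last (g : (Fin n → W) ≃ᵃ[k] (Fin n → W)) (y : Fin (n + 1) → W) :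
    g.snocLast y (Fin.last n) = y (Fin.last n) := by
  simp [AffineEquiv.snocLast, Fin.snocLinearEquiv, Fin.snocEquiv]

@[simp]
theorem AffineEquiv.snocLast_apply_castSucc (g : (Fin n → W) ≃ᵃ[k] (Fin n → W))
    (y : Fin (n + 1) → W) (i : Fin n) : g.snocLast y i.castSucc = g (Fin.init y) i := by
  simp [AffineEquiv.snocLast, Fin.snocLinearEquiv, Fin.snocEquiv]

end SnocLast

theorem exists_eq_zero_of_mem_Tset : ∀ {n : ℕ} {z : Fin n → ℝ}, z ∈ Tset n → ∃ j, z j = 0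
  | 0, _, h => h.elim
  | n + 1, _, Or.inl h => ⟨Fin.last n, h⟩
  | _ + 1, _, Or.inr ⟨h, _⟩ =>
    let ⟨j, hj⟩ := exists_eq_zero_of_mem_Tset h
    ⟨j.castSucc, hj⟩

theorem isTShaped_empty (n : ℕ) : IsTShaped n ∅ :=
  ⟨AffineEquiv.refl ℝ _, fun _ hx => hx.elim⟩

theorem IsTShaped.succ_of_apply_last_nonneg {n : ℕ} {C : Set (Fin (n + 2) → ℝ)}
    (h : (Fin (n + 2) → ℝ) ≃ᵃ[ℝ] (Fin (n + 2) → ℝ))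
    (hnonneg : ∀ x ∈ C, 0 ≤ h x (Fin.last (n + 1)))
    (hT : IsTShaped n (Fin.init ∘ h '' {x ∈ C | h x (Fin.last (n + 1)) ≠ 0})) :
    IsTShaped (n + 1) C := by
  obtain ⟨g, hg⟩ := hT
  refine ⟨h.trans g.snocLast, fun x hx => ?_⟩
  show _ = 0 ∨ (_ ∈ Tset n ∧ 0 ≤ _)
  simp only [AffineEquiv.trans_apply, Fin.succ_last, AffineEquiv.snocLast_apply_last,
    Fin.succ_castSucc, AffineEquiv.snocLast_apply_castSucc]
  by_cases h0 : h x (Fin.last (n + 1)) = 0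
  · exact Or.inl h0
  · exact Or.inr ⟨hg _ ⟨x, ⟨hx, h0⟩, rfl⟩, hnonneg x hx⟩

theorem isTShaped_of_ncard_lt :
    ∀ {n : ℕ} {C : Set (Fin (n + 1) → ℝ)}, C.Finite → C.ncard < (n + 1) * (n + 2) / 2 →
      IsTShaped n C
  | 0, C, hC, hcard => by
    rw [(Set.ncard_eq_zero hC).1 (by omega)]
    exact isTShaped_empty 0
  | n + 1, C, hC, hcard => by
    obtain ⟨ℓ, hℓ, hnonneg, hZ⟩ := exists_supporting_affineMap hC
    obtain ⟨h, hh⟩ := exists_affineEquiv_apply_last_eq (Module.finrank_fin_fun ℝ) hℓ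
    rw [Module.finrank_fin_fun] at hZ
    refine IsTShaped.succ_of_apply_last_nonneg h (by simpa only [hh] using hnonneg)
      (isTShaped_of_ncard_lt ((hC.subset (Set.sep_subset _ _)).image _) ?_)
    simp only [hh]
    have hrec : (n + 1 + 1) * (n + 1 + 2) / 2 = (n + 1) * (n + 2) / 2 + (n + 2) := by
      rw [show (n + 1 + 1) * (n + 1 + 2) = (n + 1) * (n + 2) + (n + 2) * 2 by ring,
        Nat.add_mul_div_right _ _ two_pos]
    have hpos : 2 ≤ (n + 1) * (n + 2) := by nlinarith
    have hoff : {x ∈ C | ℓ x ≠ 0} = C \ {x ∈ C | ℓ x = 0} := by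
      ext x
      simp only [Set.mem_ofPred_eq, Set.mem_sdiff]
      tauto
    calc (Fin.init ∘ h '' {x ∈ C | ℓ x ≠ 0}).ncard
        ≤ {x ∈ C | ℓ x ≠ 0}.ncard := Set.ncard_image_le (hC.subset (Set.sep_subset _ _))
      _ = C.ncard - {x ∈ C | ℓ x = 0}.ncard := by
        rw [hoff, Set.ncard_sdiff' (Set.sep_subset _ _) hC]
      _ < (n + 1) * (n + 2) / 2 := by omega

def momentCurve (n : ℕ) (t : ℝ) : Fin n → ℝ := fun i => t ^ (i.val + 1)

open Polynomial in
theorem card_le_of_forall_affineMap_momentCurve_eq_zero {n : ℕ} {ℓ : (Fin n → ℝ) →ᵃ[ℝ] ℝ}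
    (hℓ : ℓ.linear ≠ 0) {S : Finset ℝ} (hS : ∀ t ∈ S, ℓ (momentCurve n t) = 0) :
    S.card ≤ n := by
  set a : Fin n → ℝ := fun i => ℓ.linear fun j => if i = j then 1 else 0
  set p : ℝ[X] := C (ℓ 0) + ∑ i, C (a i) * X ^ (i.val + 1)
  have heval : ∀ t : ℝ, p.eval t = ℓ (momentCurve n t) := by
    intro t
    unfold momentCurve
    rw [congrFun ℓ.decomp, Pi.add_apply, LinearMap.pi_apply_eq_sum_univ, add_comm]
    simp only [p, a, eval_add, eval_C, eval_finsetSum, eval_mul, eval_pow, eval_X, smul_eq_mul,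
      mul_comm]
  have hcoeff : ∀ i : Fin n, p.coeff (i.val + 1) = a i := by
    intro i
    simp [p, coeff_X_pow, Fin.val_inj]
  have hp : p ≠ 0 := by
    intro hp
    have ha : ∀ i, a i = 0 := fun i => by simpa [hp] using (hcoeff i).symm
    refine hℓ (LinearMap.ext fun x => ?_)
    rw [LinearMap.pi_apply_eq_sum_univ ℓ.linear x]
    exact Finset.sum_eq_zero fun i _ => mul_eq_zero_of_right _ (ha i)
  have hdeg : p.natDegree ≤ n := by
    refine natDegree_add_le_of_degree_le (by simp) ?_
    refine natDegree_sum_le_of_forall_le _ _ fun i _ => ?_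
    exact (natDegree_C_mul_le _ _).trans (by simp [Nat.succ_le_of_lt i.isLt])
  refine (card_le_degree_of_subset_roots fun t ht => ?_).trans hdeg
  rw [mem_roots hp, IsRoot, heval]
  exact hS t ht

theorem not_isTShaped_momentCurve (n : ℕ) :
    ¬ IsTShaped n (Set.range fun k : Fin (n * (n + 1) + 1) => momentCurve (n + 1) k) := by
  rintro ⟨f, hf⟩
  have hzero : ∀ k : Fin (n * (n + 1) + 1), ∃ j : Fin n, f (momentCurve (n + 1) k) j.succ = 0 :=
    fun k => exists_eq_zero_of_mem_Tset (hf _ ⟨k, rfl⟩)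
  choose c hc using hzero
  obtain ⟨j, hj⟩ := Fintype.exists_lt_card_fiber_of_mul_lt_card c (n := n + 1) (by simp)
  let ℓ := (AffineMap.proj j.succ).comp f.toAffineMap
  have hℓ : ℓ.linear ≠ 0 := AffineMap.linear_ne_zero_of_apply_ne
    (x := f.symm (Pi.single j.succ 1)) (y := f.symm 0) (by simp [ℓ])
  have := card_le_of_forall_affineMap_momentCurve_eq_zero hℓ
    (S := (Finset.univ.filter (c · = j)).image fun k : Fin _ => ((k : ℕ) : ℝ)) (by
      simp only [Finset.mem_image, Finset.mem_filter]
      rintro _ ⟨k, ⟨-, rfl⟩, rfl⟩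
      exact hc k)
  rw [Finset.card_image_of_injective _ fun _ _ h => Fin.val_injective (Nat.cast_injective h)]
    at this
  omega

/-- For every `m = n + 1 ≥ 1`, `t(ℝᵐ) ≥ m (m + 1) / 2`. -/
theorem tNum_ge_triangular (n : ℕ) :
    (n + 1) * (n + 2) / 2 ≤ tNum n := by
  unfold tNum
  refine le_csInf ⟨_, _, (Set.finite_range _).cast_ncard_eq.symm, not_isTShaped_momentCurve n⟩ ?_
  rintro m ⟨C, hCm, hC⟩
  by_contra! hlt
  exact hC (isTShaped_of_ncard_lt (Set.finite_of_encard_eq_coe hCm)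
    (by rwa [Set.ncard_def, hCm, ENat.toNat_natCast]))
end
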